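/- arXiv:1907.05481 — 3 statements merged into one kernel-verified Lean document; each statement's English description precedes it below -/
import Mathlib

section
/- In a quantitative reachability game, if a play ρ is λ-consistent for a labeling function λ : V → ℕ∞, and ρ' is obtained from ρ by removing an unnecessary cycle, then ρ' is also λ-consistent. -/
open scoped Classical

structure Arena (V : Type) where
  E : V → V → Prop
  succ : ∀ v, ∃ w, E v w

variable {V P : Type}

/-- An infinite play: consecutive vertices are connected by edges. -/
def IsPlay (A : Arena V) (ρ : ℕ → V) : Prop := ∀ k, A.E (ρ k) (ρ (k + 1))

/-- Cost: least index of a visit to `F`, or `⊤` if never visited. -/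
noncomputable def cost (F : Set V) (ρ : ℕ → V) : ℕ∞ :=
  ⨅ (k : ℕ) (_ : ρ k ∈ F), (k : ℕ∞)

/-- Qualitative gain: `1` if the play visits `F`, else `0`. -/
noncomputable def gain (F : Set V) (ρ : ℕ → V) : ℕ :=
  if ∃ n, ρ n ∈ F then 1 else 0

/-- The set of players whose target set is visited along the play. -/
def visit (F : P → Set V) (ρ : ℕ → V) : Set P := {i | ∃ n, ρ n ∈ F i}

/-- The set of players whose target set is visited within the prefix `ρ₀…ρₖ`. -/
def visitPrefix (F : P → Set V) (ρ : ℕ → V) (k : ℕ) : Set P := {i | ∃ n ≤ k, ρ n ∈ F i}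

/-- A multiplayer reachability game: an arena, an owner for each vertex,
and a target set for each player. -/
structure Game (P V : Type) extends Arena V where
  owner : V → P
  F : P → Set V

/-- A strategy maps (past history, current vertex) to the next vertex. -/
abbrev Strat (V : Type) := List V → V → V

def IsStrategy (A : Arena V) (s : Strat V) : Prop := ∀ p v, A.E v (s p v)

noncomputable def histStep (G : Game P V) (σ : P → Strat V) :
    List V × V → List V × V :=
  fun x => (x.1 ++ [x.2], σ (G.owner x.2) x.1 x.2)

/-- The unique play from `v0` consistent with the strategy profile `σ`. -/
noncomputable def outcome (G : Game P V) (σ : P → Strat V) (v0 : V) (k : ℕ) : V :=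
  ((histStep G σ)^[k] ([], v0)).2

/-- Replace the strategy of player `i` by `s` in the profile `σ`. -/
noncomputable def updProfile (σ : P → Strat V) (i : P) (s : Strat V) : P → Strat V :=
  fun j => if j = i then s else σ j

/-- Nash equilibrium for the quantitative (cost-minimizing) semantics. -/
def IsNE (G : Game P V) (σ : P → Strat V) (v0 : V) : Prop :=
  (∀ i, IsStrategy G.toArena (σ i)) ∧
  ∀ (i : P) (s : Strat V), IsStrategy G.toArena s →
    cost (G.F i) (outcome G σ v0) ≤ cost (G.F i) (outcome G (updProfile σ i s) v0)

/-- Nash equilibrium for the qualitative (gain-maximizing) semantics. -/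
def IsNEqual (G : Game P V) (σ : P → Strat V) (v0 : V) : Prop :=
  (∀ i, IsStrategy G.toArena (σ i)) ∧
  ∀ (i : P) (s : Strat V), IsStrategy G.toArena s →
    gain (G.F i) (outcome G (updProfile σ i s) v0) ≤ gain (G.F i) (outcome G σ v0)

/-- The profile in which player `i` plays `s` and all other players (the
coalition `-i`) jointly play `t`. -/
noncomputable def coalProfile (i : P) (s t : Strat V) : P → Strat V :=
  fun j => if j = i then s else t

/-- Value of the coalitional zero-sum game `G_i` from `v`: player `i`
minimizes the first hitting time of `F i` against the coalition. -/
noncomputable def val (G : Game P V) (i : P) (v : V) : ℕ∞ :=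
  ⨅ s : {s : Strat V // IsStrategy G.toArena s},
    ⨆ t : {t : Strat V // IsStrategy G.toArena t},
      cost (G.F i) (outcome G (coalProfile i s.1 t.1) v)

/-- A positional (memoryless) strategy only depends on the current vertex. -/
def Positional (s : Strat V) : Prop := ∀ p q v, s p v = s q v

/-- An optimal strategy for the minimizer (player `i`) in `G_i`. -/
def OptimalMin (G : Game P V) (i : P) (s : Strat V) : Prop :=
  IsStrategy G.toArena s ∧
  ∀ (v : V) (t : Strat V), IsStrategy G.toArena t →
    cost (G.F i) (outcome G (coalProfile i s t) v) ≤ val G i v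

/-- An optimal strategy for the maximizer (the coalition `-i`) in `G_i`. -/
def OptimalMax (G : Game P V) (i : P) (t : Strat V) : Prop :=
  IsStrategy G.toArena t ∧
  ∀ (v : V) (s : Strat V), IsStrategy G.toArena s →
    val G i v ≤ cost (G.F i) (outcome G (coalProfile i s t) v)

/-- `λ`-consistency of a play. -/
def lambdaConsistent (G : Game P V) (lam : V → ℕ∞) (ρ : ℕ → V) : Prop :=
  ∀ (i : P) (k : ℕ), G.owner (ρ k) = i → (∀ n ≤ k, ρ n ∉ G.F i) →
    cost (G.F i) (fun j => ρ (k + j)) ≤ lam (ρ k)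

/-- A lasso `hℓ^ω` of length `|hℓ| ≤ L`. -/
def IsLasso (ρ : ℕ → V) (L : ℕ) : Prop :=
  ∃ n p, 0 < p ∧ n + p ≤ L ∧ ∀ k, n ≤ k → ρ (k + p) = ρ k

/-- The play obtained by removing the cycle `ρₖ…ρₖ₊ₗ` from `ρ`. -/
def removeCycle (ρ : ℕ → V) (k l : ℕ) : ℕ → V :=
  fun j => if j ≤ k then ρ j else ρ (j + l)

/-- `ρₖ…ρₖ₊ₗ` is an unnecessary cycle: it is a (nontrivial) cycle inside of
which no new player visits his target set. -/
def UnnecessaryCycle (F : P → Set V) (ρ : ℕ → V) (k l : ℕ) : Prop :=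
  0 < l ∧ ρ k = ρ (k + l) ∧ visitPrefix F ρ k = visitPrefix F ρ (k + l)

/-- The set of cost profiles of plays from `v0`. -/
def costProfiles (G : Game P V) (v0 : V) : Set (P → ℕ∞) :=
  {c | ∃ ρ, IsPlay G.toArena ρ ∧ ρ 0 = v0 ∧ c = fun i => cost (G.F i) ρ}

/-- The set of gain profiles of plays from `v0`. -/
def gainProfiles (G : Game P V) (v0 : V) : Set (P → ℕ) :=
  {c | ∃ ρ, IsPlay G.toArena ρ ∧ ρ 0 = v0 ∧ c = fun i => gain (G.F i) ρ}

/-- Pareto optimality for cost profiles: minimal in the componentwise order. -/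
def ParetoMinimal {α : Type} [Preorder α] (S : Set α) (p : α) : Prop :=
  p ∈ S ∧ ∀ q ∈ S, q ≤ p → q = p

/-- Pareto optimality for gain profiles: maximal in the componentwise order. -/
def ParetoMaximal {α : Type} [Preorder α] (S : Set α) (p : α) : Prop :=
  p ∈ S ∧ ∀ q ∈ S, p ≤ q → q = p

/-- `h ++ [v]` is a history from `v0`: a finite path starting at `v0`
whose current (last) vertex is `v`; `h` is the strict past. -/
def IsHist (A : Arena V) (v0 : V) (h : List V) (v : V) : Prop :=
  (h ++ [v]).head? = some v0 ∧ List.Chain' A.E (h ++ [v])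

/-- The strategy `s` shifted by the past history `h` (i.e. `s|h`). -/
noncomputable def shiftStrat (s : Strat V) (h : List V) : Strat V :=
  fun p v => s (h ++ p) v

/-- Gain of a play `ρ` in the subgame after past history `h`:
`1` iff `h·ρ` visits `F`. -/
noncomputable def gainAfter (F : Set V) (h : List V) (ρ : ℕ → V) : ℕ :=
  if (∃ x ∈ h, x ∈ F) ∨ (∃ n, ρ n ∈ F) then 1 else 0

/-- Subgame perfect equilibrium for qualitative reachability games:
in every subgame after a history from `v0`, no player can strictly
increase his gain by a unilateral deviation. -/
def IsSPEqual (G : Game P V) (σ : P → Strat V) (v0 : V) : Prop :=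
  (∀ i, IsStrategy G.toArena (σ i)) ∧
  ∀ (h : List V) (v : V), IsHist G.toArena v0 h v →
    ∀ (i : P) (s : Strat V), IsStrategy G.toArena s →
      gainAfter (G.F i) h
          (outcome G (updProfile (fun j => shiftStrat (σ j) h) i s) v) ≤
        gainAfter (G.F i) h (outcome G (fun j => shiftStrat (σ j) h) v)

/-!
Up to index `k` the play `ρ'` agrees with `ρ`, and from index `k` on it is `ρ` shifted by `l`.
A suffix of `ρ'` starting after `k` is therefore a suffix of `ρ`, and a player who has not yet
visited his target in `ρ'` has not visited it in the corresponding prefix of `ρ` either, because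
the cycle brings no new visit. For a suffix starting at `m ≤ k`, every visit of `ρ` after `m` is
matched by a visit of `ρ'` that comes no later: a visit inside the cycle is preceded by one at
an index in `[m, k]`, and a visit after the cycle moves `l` steps earlier.
-/

lemma cost_le_cost_of_forall_mem {F : Set V} {σ τ : ℕ → V}
    (h : ∀ j, τ j ∈ F → ∃ j' ≤ j, σ j' ∈ F) : cost F σ ≤ cost F τ := by
  refine le_iInf₂ fun j hj => ?_
  obtain ⟨j', hle, hmem⟩ := h j hj
  calc cost F σ ≤ j' := iInf₂_le j' hmem
    _ ≤ j := by exact_mod_cast hle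

lemma UnnecessaryCycle.exists_le_of_mem {F : P → Set V} {ρ : ℕ → V} {k l : ℕ}
    (h : UnnecessaryCycle F ρ k l) {i : P} {n : ℕ} (hn : n ≤ k + l) (hmem : ρ n ∈ F i) :
    ∃ n' ≤ k, ρ n' ∈ F i := by
  change i ∈ visitPrefix F ρ k
  rw [h.2.2]
  exact ⟨n, hn, hmem⟩

section removeCycle

variable {ρ : ℕ → V} {k l m n : ℕ}

lemma removeCycle_of_le (hn : n ≤ k) : removeCycle ρ k l n = ρ n := if_pos hn

lemma removeCycle_of_lt (hn : k < n) : removeCycle ρ k l n = ρ (n + l) :=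
  if_neg (Nat.not_le.mpr hn)

lemma removeCycle_of_ge (hcyc : ρ k = ρ (k + l)) (hn : k ≤ n) :
    removeCycle ρ k l n = ρ (n + l) := by
  rcases hn.eq_or_lt with rfl | hlt
  · rw [removeCycle_of_le le_rfl, hcyc]
  · exact removeCycle_of_lt hlt

lemma removeCycle_suffix_of_lt (hm : k < m) :
    (fun j => removeCycle ρ k l (m + j)) = fun j => ρ (m + l + j) := by
  funext j
  rw [removeCycle_of_lt (by omega), Nat.add_right_comm]

variable {F : Set V}

lemma cost_removeCycle_suffix_le (hcyc : ρ k = ρ (k + l)) (hm : m ≤ k)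
    (hvis : ∀ n ≤ k + l, ρ n ∈ F → ∃ n' ≤ k, ρ n' ∈ F) (hnot : ∀ n < m, ρ n ∉ F) :
    cost F (fun j => removeCycle ρ k l (m + j)) ≤ cost F (fun j => ρ (m + j)) := by
  refine cost_le_cost_of_forall_mem fun j hj => ?_
  rcases le_or_gt (m + j) k with hbefore | hafter
  · exact ⟨j, le_rfl, by rwa [removeCycle_of_le hbefore]⟩
  rcases le_or_gt (k + l) (m + j) with hpast | hinside
  · refine ⟨j - l, Nat.sub_le _ _, ?_⟩
    rwa [removeCycle_of_ge hcyc (by omega), show m + (j - l) + l = m + j by omega]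
  · obtain ⟨n, hnk, hmem⟩ := hvis (m + j) hinside.le hj
    have hmn : m ≤ n := Nat.le_of_not_lt fun hlt => hnot n hlt hmem
    refine ⟨n - m, by omega, ?_⟩
    rwa [removeCycle_of_le (by omega), Nat.add_sub_cancel' hmn]

lemma not_mem_of_removeCycle_not_mem (hm : k < m)
    (hvis : ∀ n ≤ k + l, ρ n ∈ F → ∃ n' ≤ k, ρ n' ∈ F)
    (hnot : ∀ n ≤ m, removeCycle ρ k l n ∉ F) : ∀ n ≤ m + l, ρ n ∉ F := by
  intro n hn hmem
  rcases le_or_gt n (k + l) with hcycle | hpast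
  · obtain ⟨n', hn'k, hmem'⟩ := hvis n hcycle hmem
    exact hnot n' (by omega) (by rwa [removeCycle_of_le hn'k])
  · refine hnot (n - l) (by omega) ?_
    rwa [removeCycle_of_lt (by omega), Nat.sub_add_cancel (by omega)]

end removeCycle

theorem stmt4_general {V P : Type} (G : Game P V) (lam : V → ℕ∞) (ρ : ℕ → V)
    (hcons : lambdaConsistent G lam ρ)
    (k l : ℕ) (hcyc : UnnecessaryCycle G.F ρ k l) :
    lambdaConsistent G lam (removeCycle ρ k l) := by
  intro i m hown hnot
  have hvis : ∀ n ≤ k + l, ρ n ∈ G.F i → ∃ n' ≤ k, ρ n' ∈ G.F i :=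
    fun n hn hmem => hcyc.exists_le_of_mem hn hmem
  rcases le_or_gt m k with hm | hm
  · have hnot' : ∀ n ≤ m, ρ n ∉ G.F i := fun n hn => by
      simpa only [removeCycle_of_le (hn.trans hm)] using hnot n hn
    rw [removeCycle_of_le hm] at hown ⊢
    exact (cost_removeCycle_suffix_le hcyc.2.1 hm hvis fun n hn => hnot' n hn.le).trans
      (hcons i m hown hnot')
  · rw [removeCycle_suffix_of_lt hm, removeCycle_of_lt hm]
    rw [removeCycle_of_lt hm] at hown
    exact hcons i (m + l) hown (not_mem_of_removeCycle_not_mem hm hvis hnot)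

/-- removing an unnecessary cycle preserves `λ`-consistency. -/
theorem stmt4 {V P : Type} (G : Game P V) (lam : V → ℕ∞) (ρ : ℕ → V)
    (hρ : IsPlay G.toArena ρ) (hcons : lambdaConsistent G lam ρ)
    (k l : ℕ) (hcyc : UnnecessaryCycle G.F ρ k l) :
    lambdaConsistent G lam (removeCycle ρ k l) :=
  stmt4_general G lam ρ hcons k l hcyc
end

section
/- In a quantitative reachability game, if a play ρ from v₀ is Val-consistent (i.e., for every player i and index k with ρₖ ∈ V_i and i not having visited F_i in ρ₀…ρₖ, Cost_i(ρ_{≥k}) ≤ Val_i(ρₖ)), then there exists a Nash equilibrium σ from v₀ with outcome ρ. -/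
open scoped Classical

variable {V P : Type}

/-!
Everybody follows `ρ` until the play leaves it, say because the owner `i` of `ρ K` moves to some
`w ≠ ρ (K + 1)`; from then on the other players play an optimal strategy of the coalition in the
zero-sum game `G_i` from `w`. Player `i` then reaches `F i` no earlier than `K + 1 + Val_i(w)`,
while `Val_i(ρ K) ≤ 1 + Val_i(w)` since `i` owns `ρ K`. So, unless `F i` was already visited in
`ρ₀ … ρ_K` (and then the deviation changes nothing), `Val`-consistency `Cost_i(ρ) ≤ K + Val_i(ρ K)`
shows that the deviation does not pay off.
-/

section Cost

variable {F : Set V} {ρ π : ℕ → V}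

lemma cost_le_of_mem {k : ℕ} (h : ρ k ∈ F) : cost F ρ ≤ k := iInf₂_le k h

lemma le_cost_iff {c : ℕ∞} : c ≤ cost F ρ ↔ ∀ k, ρ k ∈ F → c ≤ k := le_iInf₂_iff

lemma cost_le_add_cost_shift (k : ℕ) : cost F ρ ≤ k + cost F (fun j => ρ (k + j)) := by
  simp only [cost, ENat.add_iInf]
  exact le_iInf₂ fun j hj => (cost_le_of_mem hj).trans (by push_cast; rfl)

lemma add_cost_shift_le (k : ℕ) (h : ∀ n < k, ρ n ∉ F) :
    k + cost F (fun j => ρ (k + j)) ≤ cost F ρ := by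
  refine le_cost_iff.2 fun n hn => ?_
  obtain ⟨j, rfl⟩ := Nat.exists_eq_add_of_le (not_lt.1 fun hlt => h n hlt hn)
  push_cast
  exact add_le_add_right (cost_le_of_mem (ρ := fun j => ρ (k + j)) hn) _

lemma cost_le_cost_of_agree_of_mem {K : ℕ} (hagree : ∀ n ≤ K, π n = ρ n)
    (hmem : ∃ n ≤ K, ρ n ∈ F) : cost F ρ ≤ cost F π := by
  obtain ⟨n, hnK, hn⟩ := hmem
  refine le_cost_iff.2 fun m hm => ?_
  rcases le_or_gt m K with hmK | hKm
  · exact cost_le_of_mem (hagree m hmK ▸ hm)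
  · exact (cost_le_of_mem hn).trans (by exact_mod_cast hnK.trans hKm.le)

end Cost

namespace List

variable {α : Type*} (f : ℕ → α)

lemma map_range_succ (k : ℕ) : (range (k + 1)).map f = (range k).map f ++ [f k] := by
  simp [range_succ]

lemma map_range_add (m n : ℕ) :
    (range (m + n)).map f = (range m).map f ++ (range n).map (fun j => f (m + j)) := by
  simp [range_add, Function.comp_def]

lemma getElem?_map_range {k n : ℕ} (h : k < n) : ((range n).map f)[k]? = some (f k) := by
  simp [getElem?_range h]

end List

section Outcome

variable {G : Game P V} {σ : P → Strat V} {v0 : V} {π : ℕ → V}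

lemma iterate_histStep (k : ℕ) :
    (histStep G σ)^[k] ([], v0) = ((List.range k).map (outcome G σ v0), outcome G σ v0 k) := by
  induction k with
  | zero => rfl
  | succ k ih =>
    rw [Function.iterate_succ_apply', ih]
    refine Prod.ext (List.map_range_succ _ k).symm ?_
    show _ = ((histStep G σ)^[k + 1] ([], v0)).2
    rw [Function.iterate_succ_apply', ih]

@[simp]
lemma outcome_zero : outcome G σ v0 0 = v0 := rfl

lemma outcome_succ (k : ℕ) :
    outcome G σ v0 (k + 1) =
      σ (G.owner (outcome G σ v0 k)) ((List.range k).map (outcome G σ v0)) (outcome G σ v0 k) := by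
  rw [outcome, Function.iterate_succ_apply', iterate_histStep]
  rfl

lemma outcome_eq_iff : outcome G σ v0 = π ↔
    π 0 = v0 ∧ ∀ k, σ (G.owner (π k)) ((List.range k).map π) (π k) = π (k + 1) := by
  constructor
  · rintro rfl
    exact ⟨rfl, fun k => (outcome_succ k).symm⟩
  · rintro ⟨h0, hstep⟩
    have key : ∀ k, (List.range k).map (outcome G σ v0) = (List.range k).map π ∧
        outcome G σ v0 k = π k := by
      intro k
      induction k with
      | zero => exact ⟨rfl, h0.symm⟩
      | succ k ih =>
        rw [List.map_range_succ, List.map_range_succ, outcome_succ, ih.1, ih.2, hstep]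
        exact ⟨rfl, rfl⟩
    exact funext fun k => (key k).2

end Outcome

lemma IsStrategy.shiftStrat {A : Arena V} {s : Strat V} (hs : IsStrategy A s) (h : List V) :
    IsStrategy A (shiftStrat s h) := fun p v => hs (h ++ p) v

lemma val_le_one_add_val {G : Game P V} {i : P} {v w : V} (hown : G.owner v = i)
    (hE : G.E v w) : val G i v ≤ 1 + val G i w := by
  rw [val, val, ENat.add_iInf]
  refine le_iInf fun s => ?_
  -- move to `w`, then play `s` as if the play had started there
  set s' : Strat V := fun p u => if p = [] ∧ u = v then w else s.1 p.tail u
  have hs' : IsStrategy G.toArena s' := by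
    intro p u
    by_cases h : p = [] ∧ u = v
    · simpa [s', h] using hE
    · simpa [s', h] using s.2 p.tail u
  refine iInf_le_of_le ⟨s', hs'⟩ (iSup_le fun t => ?_)
  have htail : outcome G (coalProfile i s.1 (shiftStrat t.1 [v])) w =
      fun j => outcome G (coalProfile i s' t.1) v (1 + j) := by
    refine outcome_eq_iff.2 ⟨?_, fun k => ?_⟩
    · show outcome G (coalProfile i s' t.1) v (0 + 1) = w
      rw [outcome_succ]
      simp [coalProfile, hown, s']
    · show _ = outcome G (coalProfile i s' t.1) v (1 + k + 1)
      rw [outcome_succ (1 + k), List.map_range_add]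
      by_cases hj : G.owner (outcome G (coalProfile i s' t.1) v (1 + k)) = i
      · simp [coalProfile, hj, s']
      · simp [coalProfile, hj, shiftStrat]
  calc cost (G.F i) (outcome G (coalProfile i s' t.1) v)
      ≤ 1 + cost (G.F i) (fun j => outcome G (coalProfile i s' t.1) v (1 + j)) := by
        exact_mod_cast cost_le_add_cost_shift 1
    _ ≤ 1 + ⨆ t : {t : Strat V // IsStrategy G.toArena t},
          cost (G.F i) (outcome G (coalProfile i s.1 t.1) w) := by
        rw [← htail]
        gcongr
        exact le_iSup_of_le (⟨_, t.2.shiftStrat [v]⟩ :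
          {t : Strat V // IsStrategy G.toArena t}) le_rfl

lemma exists_first_deviation {ρ π : ℕ → V} (h0 : π 0 = ρ 0) (hne : π ≠ ρ) :
    ∃ K, (∀ n ≤ K, π n = ρ n) ∧ π (K + 1) ≠ ρ (K + 1) := by
  have hex : ∃ n, π (n + 1) ≠ ρ (n + 1) := by
    by_contra! h
    exact hne (funext fun n => by cases n; exacts [h0, h _])
  refine ⟨Nat.find hex, fun n hn => ?_, Nat.find_spec hex⟩
  cases n with
  | zero => exact h0
  | succ n => exact not_not.1 (Nat.find_min hex (by omega))

lemma cost_le_cost_of_deviation {G : Game P V} {ρ π : ℕ → V} {i : P} {K : ℕ}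
    (hcons : lambdaConsistent G (fun v => val G (G.owner v) v) ρ)
    (hagree : ∀ n ≤ K, π n = ρ n) (hown : G.owner (ρ K) = i) (hE : G.E (ρ K) (π (K + 1)))
    (hpunish : val G i (π (K + 1)) ≤ cost (G.F i) (fun j => π (K + 1 + j))) :
    cost (G.F i) ρ ≤ cost (G.F i) π := by
  by_cases hvisited : ∃ n ≤ K, ρ n ∈ G.F i
  · exact cost_le_cost_of_agree_of_mem hagree hvisited
  push Not at hvisited
  have hρK : cost (G.F i) (fun j => ρ (K + j)) ≤ val G i (ρ K) := by
    simpa [hown] using hcons i K hown hvisited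
  calc cost (G.F i) ρ ≤ K + cost (G.F i) (fun j => ρ (K + j)) := cost_le_add_cost_shift K
    _ ≤ K + (1 + val G i (π (K + 1))) := by
      gcongr
      exact hρK.trans (val_le_one_add_val hown hE)
    _ ≤ K + (1 + cost (G.F i) (fun j => π (K + 1 + j))) := by gcongr
    _ = (K + 1 : ℕ) + cost (G.F i) (fun j => π (K + 1 + j)) := by push_cast; ring
    _ ≤ cost (G.F i) π := add_cost_shift_le _ fun n hn => by
      rw [hagree n (by omega)]
      exact hvisited n (by omega)

section FollowOrPunish

variable {G : Game P V} {ρ π : ℕ → V} {punish : P → Strat V}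

-- Position of the last vertex before the history `l` leaves `ρ` (`l[0]` is not compared: every
-- history starts at `ρ 0`); the set is nonempty since `l[m]? = none` for large `m`.
noncomputable def lastAgreement (ρ : ℕ → V) (l : List V) : ℕ :=
  sInf {m | l[m + 1]? ≠ some (ρ (m + 1))}

lemma lastAgreement_map_range {K n : ℕ} (hagree : ∀ n ≤ K, π n = ρ n)
    (hdev : π (K + 1) ≠ ρ (K + 1)) (hn : K + 1 < n) :
    lastAgreement ρ ((List.range n).map π) = K := by
  have hK : K ∈ {m | ((List.range n).map π)[m + 1]? ≠ some (ρ (m + 1))} := by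
    show _ ≠ _
    rw [List.getElem?_map_range π hn]
    exact fun h => hdev (Option.some.inj h)
  refine le_antisymm (Nat.sInf_le hK) (le_csInf ⟨K, hK⟩ fun m hm => ?_)
  by_contra! hmK
  exact hm (by rw [List.getElem?_map_range π (by omega), hagree (m + 1) (by omega)])

-- Once the history has left `ρ`, everybody plays the punishing strategy of the coalition against
-- the deviator, restarted at the vertex the deviator moved to.
noncomputable def followOrPunish (G : Game P V) (ρ : ℕ → V) (punish : P → Strat V) : Strat V :=
  fun p v =>
    if p ++ [v] = (List.range (p.length + 1)).map ρ then ρ (p.length + 1)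
    else punish (G.owner (ρ (lastAgreement ρ (p ++ [v]))))
      (p.drop (lastAgreement ρ (p ++ [v]) + 1)) v

lemma isStrategy_followOrPunish (hρ : IsPlay G.toArena ρ)
    (hpunish : ∀ i, IsStrategy G.toArena (punish i)) :
    IsStrategy G.toArena (followOrPunish G ρ punish) := by
  intro p v
  unfold followOrPunish
  split_ifs with h
  · rw [List.map_range_succ] at h
    obtain ⟨-, hv⟩ := List.append_inj' h rfl
    rw [List.singleton_inj.1 hv]
    exact hρ _
  · exact hpunish _ _ _

lemma followOrPunish_map_range (k : ℕ) :
    followOrPunish G ρ punish ((List.range k).map ρ) (ρ k) = ρ (k + 1) := by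
  simp [followOrPunish, ← List.map_range_succ]

lemma outcome_followOrPunish : outcome G (fun _ => followOrPunish G ρ punish) (ρ 0) = ρ :=
  outcome_eq_iff.2 ⟨rfl, followOrPunish_map_range⟩

lemma followOrPunish_of_deviation {K : ℕ} (hagree : ∀ n ≤ K, π n = ρ n)
    (hdev : π (K + 1) ≠ ρ (K + 1)) (m : ℕ) :
    followOrPunish G ρ punish ((List.range (K + 1 + m)).map π) (π (K + 1 + m)) =
      punish (G.owner (ρ K)) ((List.range m).map (fun j => π (K + 1 + j))) (π (K + 1 + m)) := by
  have hlt : K + 1 < K + 1 + m + 1 := by omega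
  have hne : (List.range (K + 1 + m + 1)).map π ≠ (List.range (K + 1 + m + 1)).map ρ :=
    fun h => hdev (Option.some.inj (by
      rw [← List.getElem?_map_range π hlt, h, List.getElem?_map_range ρ hlt]))
  unfold followOrPunish
  rw [List.length_map, List.length_range, ← List.map_range_succ, if_neg hne,
    lastAgreement_map_range hagree hdev hlt, List.map_range_add π (K + 1) m,
    List.drop_left' (by simp)]

theorem isNE_followOrPunish (hρ : IsPlay G.toArena ρ)
    (hcons : lambdaConsistent G (fun v => val G (G.owner v) v) ρ)
    (hpunish : ∀ i, OptimalMax G i (punish i)) :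
    IsNE G (fun _ => followOrPunish G ρ punish) (ρ 0) := by
  have hσ := isStrategy_followOrPunish hρ fun i => (hpunish i).1
  refine ⟨fun _ => hσ, fun i s hs => ?_⟩
  rw [outcome_followOrPunish]
  set π := outcome G (updProfile (fun _ => followOrPunish G ρ punish) i s) (ρ 0) with hπ
  obtain ⟨hπ0, hstep⟩ := outcome_eq_iff.1 hπ.symm
  by_cases heq : π = ρ
  · rw [heq]
  obtain ⟨K, hagree, hdev⟩ := exists_first_deviation hπ0 heq
  have hown : G.owner (ρ K) = i := by
    by_contra hne
    have hprefix : (List.range K).map π = (List.range K).map ρ :=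
      List.map_congr_left fun n hn => hagree n (List.mem_range.1 hn).le
    apply hdev
    rw [← hstep K, ← followOrPunish_map_range (G := G) (ρ := ρ) (punish := punish),
      hagree K le_rfl, hprefix]
    simp [updProfile, hne]
  have hE : G.E (ρ K) (π (K + 1)) := by
    rw [← hstep K, hagree K le_rfl]
    simpa [updProfile, hown] using hs _ _
  refine cost_le_cost_of_deviation hcons hagree hown hE ?_
  have htail : outcome G (coalProfile i (shiftStrat s ((List.range (K + 1)).map π)) (punish i))
      (π (K + 1)) = fun j => π (K + 1 + j) := by
    refine outcome_eq_iff.2 ⟨by simp, fun m => ?_⟩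
    show _ = π (K + 1 + m + 1)
    rw [← hstep (K + 1 + m)]
    by_cases hj : G.owner (π (K + 1 + m)) = i
    · simp [coalProfile, updProfile, hj, shiftStrat, List.map_range_add π (K + 1) m]
    · simp [coalProfile, updProfile, hj, followOrPunish_of_deviation hagree hdev, hown]
  exact ((hpunish i).2 _ _ (hs.shiftStrat _)).trans_eq (by rw [htail])

end FollowOrPunish

theorem stmt6_general {V P : Type} (G : Game P V) (v0 : V)
    (hdet : ∀ i : P, (∃ s, Positional s ∧ OptimalMin G i s) ∧
      (∃ t, Positional t ∧ OptimalMax G i t))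
    (ρ : ℕ → V) (hρ : IsPlay G.toArena ρ) (h0 : ρ 0 = v0)
    (hcons : lambdaConsistent G (fun v => val G (G.owner v) v) ρ) :
    ∃ σ : P → Strat V, IsNE G σ v0 ∧ outcome G σ v0 = ρ := by
  choose punish _ hpunish using fun i => (hdet i).2
  subst h0
  exact ⟨_, isNE_followOrPunish hρ hcons hpunish, outcome_followOrPunish⟩

/-- every Val-consistent play from `v0` is the outcome of a
Nash equilibrium from `v0`. -/
theorem stmt6 {V P : Type} [Fintype V] [Fintype P] (G : Game P V) (v0 : V)
    (hdet : ∀ i : P, (∃ s, Positional s ∧ OptimalMin G i s) ∧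
      (∃ t, Positional t ∧ OptimalMax G i t))
    (ρ : ℕ → V) (hρ : IsPlay G.toArena ρ) (h0 : ρ 0 = v0)
    (hcons : lambdaConsistent G (fun v => val G (G.owner v) v) ρ) :
    ∃ σ : P → Strat V, IsNE G σ v0 ∧ outcome G σ v0 = ρ :=
  stmt6_general G v0 hdet ρ hρ h0 hcons
end

section
/- There exists a three-player initialized qualitative reachability game that has no Nash equilibrium whose gain profile is Pareto optimal among gain profiles of plays from the initial vertex. -/
open scoped Classical

variable {V P : Type}

/-!
Player 1 chooses at v₀ which of players 2 and 3 moves next, and that player chooses the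
absorbing vertex. Whoever moves second can always reach her own target, so in a Nash
equilibrium she does; the resulting gain profile is (0,1,0) or (0,0,1), strictly below
(1,1,0) or (1,0,1) respectively.
-/

section

variable {V P : Type}

lemma isPlay_outcome {G : Game P V} {σ : P → Strat V} (hσ : ∀ i, IsStrategy G.toArena (σ i))
    (v0 : V) : IsPlay G.toArena (outcome G σ v0) := fun k => by
  simp only [outcome, Function.iterate_succ_apply']
  exact hσ _ _ _

lemma isStrategy_updProfile {A : Arena V} {σ : P → Strat V} (hσ : ∀ j, IsStrategy A (σ j))
    (i : P) {s : Strat V} (hs : IsStrategy A s) (j : P) : IsStrategy A (updProfile σ i s j) := by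
  unfold updProfile
  split
  · exact hs
  · exact hσ j

lemma outcome_updProfile_two (G : Game P V) (σ : P → Strat V) (v0 : V) (f : V → V)
    (h0 : G.owner v0 ≠ G.owner (outcome G σ v0 1)) :
    outcome G (updProfile σ (G.owner (outcome G σ v0 1)) fun _ v => f v) v0 2 =
      f (outcome G σ v0 1) := by
  have h1 : outcome G (updProfile σ (G.owner (outcome G σ v0 1)) fun _ v => f v) v0 1 =
      outcome G σ v0 1 := by
    show updProfile σ _ _ (G.owner v0) [] v0 = σ (G.owner v0) [] v0
    rw [updProfile, if_neg h0]
  show updProfile σ _ _ (G.owner (outcome G _ v0 1)) [v0] (outcome G _ v0 1) = _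
  rw [h1, updProfile, if_pos rfl]

lemma gain_le_one (F : Set V) (ρ : ℕ → V) : gain F ρ ≤ 1 := by
  unfold gain
  split <;> omega

lemma IsNEqual.gain_eq_one {G : Game P V} {σ : P → Strat V} {v0 : V} (hσ : IsNEqual G σ v0)
    {i : P} {s : Strat V} (hs : IsStrategy G.toArena s)
    (hwin : gain (G.F i) (outcome G (updProfile σ i s) v0) = 1) :
    gain (G.F i) (outcome G σ v0) = 1 :=
  le_antisymm (gain_le_one _ _) (hwin ▸ hσ.2 i s hs)

lemma IsPlay.eq_of_absorbing {A : Arena V} {ρ : ℕ → V} (hρ : IsPlay A ρ) {a : V}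
    (ha : ∀ w, A.E a w → w = a) {m : ℕ} (hm : ρ m = a) (k : ℕ) : ρ (m + k) = a := by
  induction k with
  | zero => exact hm
  | succ k ih => exact ha _ (ih ▸ hρ (m + k))

lemma ParetoMaximal.not_lt {α : Type} [Preorder α] {S : Set α} {p q : α}
    (hp : ParetoMaximal S p) (hq : q ∈ S) : ¬ p < q :=
  fun hlt => hlt.ne' (hp.2 q hq hlt.le)

end

namespace ParetoCounterexample

-- Vertex vₖ is `k : Fin 7` and player j is `j - 1 : Fin 3`; the owner of an absorbing vertex
-- is irrelevant.

def nxt : Fin 7 → List (Fin 7) := ![[1, 2], [3, 4], [5, 6], [3], [4], [5], [6]]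

def targets : Fin 3 → List (Fin 7) := ![[4, 5], [3, 5], [4, 6]]

def game : Game (Fin 3) (Fin 7) where
  E v w := w ∈ nxt v
  succ v := ⟨_, List.getLast_mem (by fin_cases v <;> decide)⟩
  owner := ![0, 1, 2, 0, 0, 0, 0]
  F i := {v | v ∈ targets i}

def profile (a : Fin 7) : Fin 3 → ℕ := fun i => if a ∈ targets i then 1 else 0

lemma nxt_nxt_absorbing : ∀ u ∈ nxt 0, ∀ a ∈ nxt u, nxt a = [a] := by decide

lemma not_mem_targets : ∀ u ∈ nxt 0, ∀ i, (0 : Fin 7) ∉ targets i ∧ u ∉ targets i := by decide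

lemma gain_eq_profile {ρ : ℕ → Fin 7} (hρ : IsPlay game.toArena ρ) (h0 : ρ 0 = 0) (i : Fin 3) :
    gain (game.F i) ρ = profile (ρ 2) i := by
  have h1 : ρ 1 ∈ nxt 0 := h0 ▸ hρ 0
  have h2 : ρ 2 ∈ nxt (ρ 1) := hρ 1
  have hstay := hρ.eq_of_absorbing (m := 2)
    (fun w (hw : w ∈ nxt (ρ 2)) => List.mem_singleton.mp (nxt_nxt_absorbing _ h1 _ h2 ▸ hw)) rfl
  have hvisit : (∃ n, ρ n ∈ game.F i) ↔ ρ 2 ∈ targets i := by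
    refine ⟨?_, fun h => ⟨2, h⟩⟩
    rintro ⟨_ | _ | n, hn⟩
    · exact absurd (h0 ▸ hn) (not_mem_targets _ h1 i).1
    · exact absurd hn (not_mem_targets _ h1 i).2
    · rwa [show n + 1 + 1 = 2 + n by omega, hstay] at hn
  unfold gain profile
  by_cases h : ρ 2 ∈ targets i <;> simp [hvisit, h]

def lasso (u a : Fin 7) : ℕ → Fin 7
  | 0 => 0
  | 1 => u
  | _ + 2 => a

lemma profile_mem_gainProfiles {u a : Fin 7} (hu : u ∈ nxt 0) (ha : a ∈ nxt u) :
    profile a ∈ gainProfiles game 0 := by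
  have hρ : IsPlay game.toArena (lasso u a) := fun k =>
    match k with
    | 0 => hu
    | 1 => ha
    | _ + 2 => show a ∈ nxt a from nxt_nxt_absorbing u hu a ha ▸ List.mem_singleton_self a
  exact ⟨lasso u a, hρ, rfl, funext fun i => (gain_eq_profile hρ rfl i).symm⟩

def spoil : Fin 7 → Fin 7 := ![1, 3, 6, 3, 4, 5, 6]

lemma isStrategy_spoil : IsStrategy game.toArena fun _ v => spoil v := fun _ v => by
  show spoil v ∈ nxt v
  revert v
  decide

lemma spoil_reaches_target :
    ∀ u ∈ nxt 0, game.owner 0 ≠ game.owner u ∧ profile (spoil u) (game.owner u) = 1 := by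
  decide

lemma exists_profile_gt_of_mover_reaches_target :
    ∀ u ∈ nxt 0, ∀ a ∈ nxt u, profile a (game.owner u) = 1 →
      ∃ u' ∈ nxt 0, ∃ a' ∈ nxt u', profile a < profile a' := by
  -- the order instances on `Fin 3 → ℕ` are decided classically, so unfold them for `decide`
  simp only [Pi.lt_def, Pi.le_def]
  decide

lemma IsNEqual.mover_reaches_target {σ : Fin 3 → Strat (Fin 7)} (hσ : IsNEqual game σ 0) :
    profile (outcome game σ 0 2) (game.owner (outcome game σ 0 1)) = 1 := by
  obtain ⟨hne, hwin⟩ := spoil_reaches_target _ (isPlay_outcome hσ.1 0 0)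
  have hdev := isPlay_outcome (isStrategy_updProfile hσ.1 (game.owner (outcome game σ 0 1))
    isStrategy_spoil) 0
  rw [← gain_eq_profile (isPlay_outcome hσ.1 0) rfl]
  refine hσ.gain_eq_one isStrategy_spoil ?_
  rw [gain_eq_profile hdev rfl, outcome_updProfile_two _ _ _ _ hne]
  exact hwin

end ParetoCounterexample

open ParetoCounterexample in
/-- there is a three-player qualitative reachability game with
no Nash equilibrium whose gain profile is Pareto optimal. -/
theorem stmt16 :
    ∃ (V : Type) (_ : Fintype V) (G : Game (Fin 3) V) (v0 : V),
      ∀ σ : Fin 3 → Strat V, IsNEqual G σ v0 →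
        ¬ ParetoMaximal (gainProfiles G v0)
            (fun i => gain (G.F i) (outcome G σ v0)) := by
  refine ⟨Fin 7, inferInstance, game, 0, fun σ hσ hpareto => ?_⟩
  have hρ := isPlay_outcome hσ.1 0
  obtain ⟨u, hu, a, ha, hlt⟩ :=
    exists_profile_gt_of_mover_reaches_target _ (hρ 0) _ (hρ 1) hσ.mover_reaches_target
  rw [show (fun i => gain (game.F i) (outcome game σ 0)) = profile (outcome game σ 0 2) from
    funext (gain_eq_profile hρ rfl)] at hpareto
  exact hpareto.not_lt (profile_mem_gainProfiles hu ha) hlt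
end
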